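/- If z ∼ MVST(μ, R, Δ, ν) is multivariate skew-t distributed with density 2^n t(z; μ, Ω, ν) T(z̄; 0, L, ν+n) where Ω = R + ΔΔᵀ, L = I − ΔᵀΩ^{-1}Δ, and z̄ = ΔᵀΩ^{-1}(z−μ)·√((ν+n)/(ν+(z−μ)ᵀΩ^{-1}(z−μ))), then for any invertible matrix A ∈ ℝ^{n×n}, the random vector Az is distributed as MVST(Aμ, ARAᵀ, AΔ, ν). -/

import Mathlib

open MeasureTheory Real Matrix

/-!
Under `z ↦ A z` the scale `Ω = R + ΔΔᵀ` becomes `A Ω Aᵀ`, while the Mahalanobis form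
`(z - μ)ᵀ Ω⁻¹ (z - μ)`, the skewing vector `Δᵀ Ω⁻¹ (z - μ)` and the matrix `L = I - Δᵀ Ω⁻¹ Δ`
are unchanged. The only factor that moves is `√(det Ω)`, which picks up `|det A|`: exactly the
Jacobian of the change of variables.
-/

noncomputable def mvtPDF {n : ℕ} (μ : Fin n → ℝ) (S : Matrix (Fin n) (Fin n) ℝ)
    (ν : ℝ) (z : Fin n → ℝ) : ℝ :=
  Real.Gamma ((ν + n) / 2) /
      ((ν * Real.pi) ^ ((n : ℝ) / 2) * Real.sqrt S.det * Real.Gamma (ν / 2)) *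
    (1 + (z - μ) ⬝ᵥ (S⁻¹ *ᵥ (z - μ)) / ν) ^ (-((ν + n) / 2))

noncomputable def mvtCDF {n : ℕ} (μ : Fin n → ℝ) (S : Matrix (Fin n) (Fin n) ℝ)
    (ν : ℝ) (z : Fin n → ℝ) : ℝ :=
  ∫ w in Set.Iic z, mvtPDF μ S ν w

noncomputable def mvstPDF {n : ℕ} (μ : Fin n → ℝ) (R Δ : Matrix (Fin n) (Fin n) ℝ)
    (ν : ℝ) (z : Fin n → ℝ) : ℝ :=
  2 ^ n * mvtPDF μ (R + Δ * Δᵀ) ν z *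
    mvtCDF 0 (1 - Δᵀ * (R + Δ * Δᵀ)⁻¹ * Δ) (ν + n)
      (Real.sqrt ((ν + n) / (ν + (z - μ) ⬝ᵥ ((R + Δ * Δᵀ)⁻¹ *ᵥ (z - μ)))) •
        (Δᵀ *ᵥ ((R + Δ * Δᵀ)⁻¹ *ᵥ (z - μ))))

namespace Matrix

section Congruence

variable {m K : Type*} [Fintype m] [DecidableEq m] [CommRing K]
  {A : Matrix m m K} (S D : Matrix m m K) (v : m → K)

theorem add_mul_transpose_congr (R : Matrix m m K) :
    A * R * Aᵀ + (A * D) * (A * D)ᵀ = A * (R + D * Dᵀ) * Aᵀ := by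
  rw [transpose_mul]; noncomm_ring

variable (hA : IsUnit A.det)
include hA

theorem inv_congr_mulVec_mulVec :
    (A * S * Aᵀ)⁻¹ *ᵥ (A *ᵥ v) = Aᵀ⁻¹ *ᵥ (S⁻¹ *ᵥ v) := by
  rw [mul_inv_rev, mul_inv_rev, mulVec_mulVec, mul_assoc, mul_assoc, nonsing_inv_mul _ hA,
    mul_one, ← mulVec_mulVec]

theorem dotProduct_inv_congr_mulVec :
    (A *ᵥ v) ⬝ᵥ ((A * S * Aᵀ)⁻¹ *ᵥ (A *ᵥ v)) = v ⬝ᵥ (S⁻¹ *ᵥ v) := by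
  have hAT : IsUnit Aᵀ.det := by rwa [det_transpose]
  rw [inv_congr_mulVec_mulVec S v hA, ← vecMul_transpose, dotProduct_mulVec, vecMul_vecMul,
    mul_nonsing_inv _ hAT, vecMul_one]

theorem transpose_mul_inv_congr_mulVec :
    (A * D)ᵀ *ᵥ ((A * S * Aᵀ)⁻¹ *ᵥ (A *ᵥ v)) = Dᵀ *ᵥ (S⁻¹ *ᵥ v) := by
  have hAT : IsUnit Aᵀ.det := by rwa [det_transpose]
  rw [inv_congr_mulVec_mulVec S v hA, transpose_mul, mulVec_mulVec, mul_assoc,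
    mul_nonsing_inv _ hAT, mul_one]

theorem transpose_mul_inv_congr_mul :
    (A * D)ᵀ * (A * S * Aᵀ)⁻¹ * (A * D) = Dᵀ * S⁻¹ * D := by
  have hAT : IsUnit Aᵀ.det := by rwa [det_transpose]
  calc (A * D)ᵀ * (A * S * Aᵀ)⁻¹ * (A * D)
      = Dᵀ * (Aᵀ * Aᵀ⁻¹) * S⁻¹ * (A⁻¹ * A) * D := by
        rw [mul_inv_rev, mul_inv_rev, transpose_mul]; noncomm_ring
    _ = Dᵀ * S⁻¹ * D := by rw [mul_nonsing_inv _ hAT, nonsing_inv_mul _ hA, mul_one, mul_one]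

end Congruence

theorem sqrt_det_congr {m : Type*} [Fintype m] [DecidableEq m] (A S : Matrix m m ℝ) :
    √(A * S * Aᵀ).det = |A.det| * √S.det := by
  rw [det_mul, det_mul, det_transpose, show A.det * S.det * A.det = A.det ^ 2 * S.det by ring,
    sqrt_mul (sq_nonneg _), sqrt_sq_eq_abs]

end Matrix

section AffineInvariance

variable {n : ℕ} {A : Matrix (Fin n) (Fin n) ℝ} (hA : IsUnit A.det) (μ z : Fin n → ℝ) (ν : ℝ)
include hA

theorem mvtPDF_mulVec (S : Matrix (Fin n) (Fin n) ℝ) :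
    mvtPDF (A *ᵥ μ) (A * S * Aᵀ) ν (A *ᵥ z) = |A.det|⁻¹ * mvtPDF μ S ν z := by
  rw [mvtPDF, mvtPDF, ← mulVec_sub, dotProduct_inv_congr_mulVec S _ hA, sqrt_det_congr]
  ring

theorem mvstPDF_mulVec (R Δ : Matrix (Fin n) (Fin n) ℝ) :
    mvstPDF (A *ᵥ μ) (A * R * Aᵀ) (A * Δ) ν (A *ᵥ z) = |A.det|⁻¹ * mvstPDF μ R Δ ν z := by
  simp only [mvstPDF, add_mul_transpose_congr, ← mulVec_sub, mvtPDF_mulVec hA,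
    dotProduct_inv_congr_mulVec _ _ hA, transpose_mul_inv_congr_mulVec _ _ _ hA,
    transpose_mul_inv_congr_mul _ _ hA]
  ring

end AffineInvariance

theorem stmt_10_general {n : ℕ} (μ : Fin n → ℝ) (R Δ : Matrix (Fin n) (Fin n) ℝ)
    (ν : ℝ)
    (A : Matrix (Fin n) (Fin n) ℝ) (hA : IsUnit A.det) :
    ∀ y : Fin n → ℝ,
      mvstPDF (A *ᵥ μ) (A * R * Aᵀ) (A * Δ) ν y =
        |A.det|⁻¹ * mvstPDF μ R Δ ν (A⁻¹ *ᵥ y) := by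
  intro y
  rw [← mvstPDF_mulVec hA, mulVec_mulVec, mul_nonsing_inv _ hA, one_mulVec]

/-- affine invariance of the multivariate skew t-distribution: if
`z ∼ MVST(μ, R, Δ, ν)` and `A` is invertible then `Az ∼ MVST(Aμ, ARAᵀ, AΔ, ν)`,
expressed through the change-of-variables formula for densities. -/
theorem stmt_10 {n : ℕ} (μ : Fin n → ℝ) (R Δ : Matrix (Fin n) (Fin n) ℝ)
    (hR : R.PosDef) (ν : ℝ) (hν : 0 < ν)
    (A : Matrix (Fin n) (Fin n) ℝ) (hA : IsUnit A.det) :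
    ∀ y : Fin n → ℝ,
      mvstPDF (A *ᵥ μ) (A * R * Aᵀ) (A * Δ) ν y =
        |A.det|⁻¹ * mvstPDF μ R Δ ν (A⁻¹ *ᵥ y) :=
  stmt_10_general μ R Δ ν A hA
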